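/- Let m ≥ 1, let J_m = I^{m−1}J₁ be the (m−1)-fold zero-mean primitive of the sawtooth J₁, and let φ be a zero-mean L^∞ function on S¹ orthogonal to all trigonometric polynomials of degree ≤ k−1. Then for every trigonometric polynomial p of degree ≤ k−1, ‖I^m φ‖_∞ ≤ ‖φ‖_∞ · ‖J_m − p‖_{L¹}. -/

import Mathlib

open Real MeasureTheory intervalIntegral

/-- The 2π-periodic sawtooth: `J₁(x) = x` for `x ∈ (−π, π)` and `J₁(π) = 0`. -/
noncomputable def J1fun (x : ℝ) : ℝ :=
  if x - 2 * π * round (x / (2 * π)) = -π then 0 else x - 2 * π * round (x / (2 * π))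

/-- A real trigonometric polynomial of degree at most `n`. -/
def IsTrigPoly (n : ℕ) (p : ℝ → ℝ) : Prop :=
  ∃ a b : ℕ → ℝ, ∀ x : ℝ,
    p x = ∑ j ∈ Finset.range (n + 1), (a j * Real.cos (j * x) + b j * Real.sin (j * x))
/-!
`Φ m = I^m φ` is the convolution `x ↦ -(2π)⁻¹ ∫₀^{2π} J_m(x + π - t) φ(t) dt`: both sides are
zero-mean periodic functions, and by induction on `m` they have the same increments. For `m = 1`
this is a direct computation, since on one period `t ↦ J₁(x + π - t) - J₁(π - t)` equals `x`
except for a drop by `2π` on `t < x`, and `φ` has mean zero; the inductive step is Fubini.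
As `φ` is orthogonal to trigonometric polynomials of degree `< k`, `J_m` may be replaced by
`J_m - p` in the convolution, and the L¹–L^∞ bound for convolutions finishes the proof.
-/

open Function Set

structure BddMeasurable {α : Type*} [MeasurableSpace α] (f : α → ℝ) : Prop where
  measurable : Measurable f
  bdd : ∃ C, ∀ x, |f x| ≤ C

namespace BddMeasurable

variable {α : Type*} [MeasurableSpace α] {f g : α → ℝ}

theorem comp {β : Type*} [MeasurableSpace β] (hf : BddMeasurable f) {u : β → α}
    (hu : Measurable u) : BddMeasurable (f ∘ u) :=
  ⟨hf.measurable.comp hu, hf.bdd.imp fun _ hC x => hC (u x)⟩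

theorem mul (hf : BddMeasurable f) (hg : BddMeasurable g) : BddMeasurable (f * g) := by
  obtain ⟨C, hC⟩ := hf.bdd
  obtain ⟨D, hD⟩ := hg.bdd
  refine ⟨hf.measurable.mul hg.measurable, C * D, fun x => ?_⟩
  rw [Pi.mul_apply, abs_mul]
  exact mul_le_mul (hC x) (hD x) (abs_nonneg _) ((abs_nonneg _).trans (hC x))

theorem sub (hf : BddMeasurable f) (hg : BddMeasurable g) : BddMeasurable (f - g) := by
  obtain ⟨C, hC⟩ := hf.bdd
  obtain ⟨D, hD⟩ := hg.bdd
  exact ⟨hf.measurable.sub hg.measurable, C + D,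
    fun x => (abs_sub _ _).trans (add_le_add (hC x) (hD x))⟩

theorem abs_le_iSup (hf : BddMeasurable f) (x : α) : |f x| ≤ ⨆ y, |f y| := by
  obtain ⟨C, hC⟩ := hf.bdd
  exact le_ciSup ⟨C, by rintro _ ⟨y, rfl⟩; exact hC y⟩ x

theorem integrable {μ : Measure α} [IsFiniteMeasure μ] (hf : BddMeasurable f) : Integrable f μ := by
  obtain ⟨C, hC⟩ := hf.bdd
  exact (integrable_const C).mono' hf.measurable.aestronglyMeasurable (ae_of_all _ hC)

theorem intervalIntegrable {f : ℝ → ℝ} (hf : BddMeasurable f) (a b : ℝ) :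
    IntervalIntegrable f volume a b := by
  obtain ⟨C, hC⟩ := hf.bdd
  exact intervalIntegrable_const.mono_fun' hf.measurable.aestronglyMeasurable (ae_of_all _ hC)

end BddMeasurable

theorem Function.Periodic.bddMeasurable_of_continuous {f : ℝ → ℝ} {T : ℝ} (hf : Periodic f T)
    (hT : T ≠ 0) (hc : Continuous f) : BddMeasurable f := by
  obtain ⟨C, hC⟩ := isBounded_iff_forall_norm_le.1 (hf.isBounded_of_continuous hT hc)
  exact ⟨hc.measurable, C, fun x => hC _ (mem_range_self x)⟩

theorem Function.Periodic.primitive_periodic {f : ℝ → ℝ} {T : ℝ} (hf : Periodic f T)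
    (hint : ∀ a b, IntervalIntegrable f volume a b) (hmean : ∫ x in (0:ℝ)..T, f x = 0) :
    Periodic (fun x => ∫ t in (0:ℝ)..x, f t) T := fun x => by
  simpa [hmean] using hf.intervalIntegral_add_eq_add 0 x hint

structure IsZeroMeanPeriodic (T : ℝ) (f : ℝ → ℝ) : Prop extends BddMeasurable f where
  periodic : Periodic f T
  integral_eq_zero : ∫ x in (0:ℝ)..T, f x = 0

theorem IsZeroMeanPeriodic.of_primitive {T : ℝ} (hT : T ≠ 0) {f F : ℝ → ℝ}
    (hf : IsZeroMeanPeriodic T f) (hF : ∀ x, F x = F 0 + ∫ t in (0:ℝ)..x, f t)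
    (hFmean : ∫ x in (0:ℝ)..T, F x = 0) : IsZeroMeanPeriodic T F := by
  have hint := hf.intervalIntegrable
  have hper : Periodic F T := fun x => by
    rw [hF (x + T), hF x]
    exact congrArg (F 0 + ·) (hf.periodic.primitive_periodic hint hf.integral_eq_zero x)
  have hcont : Continuous F := by
    rw [funext hF]
    exact continuous_const.add (continuous_primitive hint 0)
  exact ⟨hper.bddMeasurable_of_continuous hT hcont, hper, hFmean⟩

theorem eq_of_sub_eq_of_integral_eq_zero {T : ℝ} (hT : 0 < T) {F G : ℝ → ℝ}
    (hFper : Periodic F T) (hGper : Periodic G T) (hFint : IntervalIntegrable F volume 0 T)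
    (hFmean : ∫ x in (0:ℝ)..T, F x = 0) (hGmean : ∫ x in (0:ℝ)..T, G x = 0)
    (hFG : ∀ x ∈ Ico 0 T, F x - F 0 = G x - G 0) : F = G := by
  have hG : ∀ x, G x = F x - (F 0 - G 0) := fun x => by
    obtain ⟨y, hy, hxy⟩ := (hFper.sub hGper).exists_mem_Ico₀ hT x
    simp only [Pi.sub_apply] at hxy
    linarith [hFG y hy]
  have hc : T * (F 0 - G 0) = 0 := by
    rw [integral_congr fun x _ => hG x, integral_sub hFint intervalIntegrable_const, hFmean,
      intervalIntegral.integral_const, smul_eq_mul] at hGmean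
    linarith
  funext x
  rw [hG x, (mul_eq_zero.1 hc).resolve_left hT.ne', sub_zero]

theorem intervalIntegral_integral_swap_of_bddMeasurable {f : ℝ → ℝ → ℝ}
    (hf : BddMeasurable (uncurry f)) (a b c d : ℝ) :
    ∫ x in a..b, ∫ y in c..d, f x y = ∫ y in c..d, ∫ x in a..b, f x y := by
  have key : ∀ {a b c d : ℝ}, a ≤ b → c ≤ d →
      ∫ x in a..b, ∫ y in c..d, f x y = ∫ y in c..d, ∫ x in a..b, f x y := by
    intro a b c d hab hcd
    have : IsFiniteMeasure (volume.restrict (Ioc a b)) := ⟨by simp⟩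
    have : IsFiniteMeasure (volume.restrict (Ioc c d)) := ⟨by simp⟩
    simp only [integral_of_le hab, integral_of_le hcd]
    exact integral_integral_swap hf.integrable
  rcases le_total a b with hab | hab <;> rcases le_total c d with hcd | hcd
  · exact key hab hcd
  · simp only [integral_symm d c, intervalIntegral.integral_neg, key hab hcd]
  · simp only [integral_symm b a, intervalIntegral.integral_neg, key hab hcd]
  · simp only [integral_symm d c, integral_symm b a, intervalIntegral.integral_neg, key hab hcd]

noncomputable def periodicConv (T : ℝ) (g φ : ℝ → ℝ) (x : ℝ) : ℝ :=
  ∫ t in (0:ℝ)..T, g (x - t) * φ t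

section periodicConv

variable {T : ℝ} {g h φ : ℝ → ℝ}

theorem BddMeasurable.comp_sub_mul (hg : BddMeasurable g) (hφ : BddMeasurable φ) :
    BddMeasurable (uncurry fun x t => g (x - t) * φ t) :=
  (hg.comp (measurable_fst.sub measurable_snd)).mul (hφ.comp measurable_snd)

theorem intervalIntegrable_comp_sub_mul (hg : BddMeasurable g) (hφ : BddMeasurable φ)
    (x a b : ℝ) : IntervalIntegrable (fun t => g (x - t) * φ t) volume a b :=
  ((hg.comp (measurable_const.sub measurable_id)).mul hφ).intervalIntegrable a b

theorem periodicConv_periodic {T' : ℝ} (hg : Periodic g T') : Periodic (periodicConv T g φ) T' :=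
  fun x => by simp only [periodicConv, add_sub_right_comm x T', hg _]

theorem periodicConv_sub (hg : BddMeasurable g) (hh : BddMeasurable h) (hφ : BddMeasurable φ)
    (x : ℝ) : periodicConv T (g - h) φ x = periodicConv T g φ x - periodicConv T h φ x := by
  simp only [periodicConv, Pi.sub_apply, sub_mul]
  exact integral_sub (intervalIntegrable_comp_sub_mul hg hφ x 0 T)
    (intervalIntegrable_comp_sub_mul hh hφ x 0 T)

theorem integral_periodicConv_add_eq_zero (hg : IsZeroMeanPeriodic T g) (hφ : BddMeasurable φ)
    (c : ℝ) : ∫ x in (0:ℝ)..T, periodicConv T g φ (x + c) = 0 := by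
  have hshift : ∀ t, ∫ x in (0:ℝ)..T, g (x + c - t) = 0 := fun t => by
    simp only [add_sub_assoc]
    rw [integral_comp_add_right, zero_add, add_comm, hg.periodic.intervalIntegral_add_eq (c - t) 0,
      zero_add, hg.integral_eq_zero]
  simp only [periodicConv]
  rw [intervalIntegral_integral_swap_of_bddMeasurable (f := fun x t => g (x + c - t) * φ t)
    ((hg.comp_sub_mul hφ).comp ((measurable_fst.add_const c).prodMk measurable_snd))]
  simp [intervalIntegral.integral_mul_const, hshift]

theorem periodicConv_sub_periodicConv {G : ℝ → ℝ} (hg : BddMeasurable g) (hG : BddMeasurable G)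
    (hGg : ∀ x, G x = G 0 + ∫ t in (0:ℝ)..x, g t) (hφ : BddMeasurable φ) (x y : ℝ) :
    periodicConv T G φ x - periodicConv T G φ y = ∫ s in y..x, periodicConv T g φ s := by
  have hinc : ∀ t, G (x - t) - G (y - t) = ∫ s in y..x, g (s - t) := fun t => by
    rw [integral_comp_sub_right, hGg (x - t), hGg (y - t), add_sub_add_left_eq_sub,
      integral_interval_sub_left (hg.intervalIntegrable _ _) (hg.intervalIntegrable _ _)]
  calc periodicConv T G φ x - periodicConv T G φ y
      = ∫ t in (0:ℝ)..T, ∫ s in y..x, g (s - t) * φ t := by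
        rw [periodicConv, periodicConv, ← integral_sub (intervalIntegrable_comp_sub_mul hG hφ x 0 T)
          (intervalIntegrable_comp_sub_mul hG hφ y 0 T)]
        refine integral_congr fun t _ => ?_
        simp only [← sub_mul, hinc, intervalIntegral.integral_mul_const]
    _ = ∫ s in y..x, periodicConv T g φ s :=
        (intervalIntegral_integral_swap_of_bddMeasurable (hg.comp_sub_mul hφ) _ _ _ _).symm

theorem abs_periodicConv_le (hT : 0 ≤ T) (hg : BddMeasurable g) (hgper : Periodic g T)
    (hφ : BddMeasurable φ) (x : ℝ) :
    |periodicConv T g φ x| ≤ (⨆ t, |φ t|) * ∫ t in (0:ℝ)..T, |g t| := by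
  have hgabs : ∀ a b, IntervalIntegrable (fun t => |g (x - t)|) volume a b := fun a b =>
    ((hg.comp (measurable_const.sub measurable_id)).intervalIntegrable a b).abs
  have hreflect : ∫ t in (0:ℝ)..T, |g (x - t)| = ∫ t in (0:ℝ)..T, |g t| := by
    have hper : Periodic (fun t => |g t|) T := fun t => by simp only [hgper t]
    rw [integral_comp_sub_left (fun t => |g t|), sub_zero]
    simpa using hper.intervalIntegral_add_eq (x - T) 0
  calc |periodicConv T g φ x| ≤ ∫ t in (0:ℝ)..T, |g (x - t) * φ t| :=
        abs_integral_le_integral_abs hT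
    _ ≤ ∫ t in (0:ℝ)..T, |g (x - t)| * ⨆ t, |φ t| := by
        refine integral_mono_on hT (intervalIntegrable_comp_sub_mul hg hφ x 0 T).abs
          ((hgabs 0 T).mul_const _) fun t _ => ?_
        rw [abs_mul]
        exact mul_le_mul_of_nonneg_left (hφ.abs_le_iSup t) (abs_nonneg _)
    _ = (⨆ t, |φ t|) * ∫ t in (0:ℝ)..T, |g t| := by
        rw [intervalIntegral.integral_mul_const, hreflect, mul_comm]

end periodicConv

theorem J1fun_eq_self {x : ℝ} (h1 : -π < x) (h2 : x < π) : J1fun x = x := by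
  have hπ := pi_pos
  have hround : round (x / (2 * π)) = 0 := by
    rw [round_eq, Int.floor_eq_zero_iff, show x / (2 * π) + 1 / 2 = (x + π) / (2 * π) by
      field_simp]
    exact ⟨div_nonneg (by linarith) (by positivity), (div_lt_one (by positivity)).2 (by linarith)⟩
  simp only [J1fun, hround, Int.cast_zero, mul_zero, sub_zero]
  exact if_neg h1.ne'

theorem J1fun_periodic : Periodic J1fun (2 * π) := fun x => by
  have h : (x + 2 * π) / (2 * π) = x / (2 * π) + 1 := by field_simp
  have h' : x + 2 * π - 2 * π * ((round (x / (2 * π)) : ℝ) + 1)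
      = x - 2 * π * (round (x / (2 * π)) : ℝ) := by ring
  simp only [J1fun, h, round_add_one, Int.cast_add, Int.cast_one, h']

theorem J1fun_eq_sub_two_pi {x : ℝ} (h1 : π < x) (h2 : x < 3 * π) : J1fun x = x - 2 * π := by
  rw [← J1fun_periodic.sub_eq, J1fun_eq_self (by linarith) (by linarith)]

theorem abs_J1fun_le (x : ℝ) : |J1fun x| ≤ π := by
  have hπ := pi_pos
  unfold J1fun
  split_ifs
  · simpa using hπ.le
  · have he : x - 2 * π * (round (x / (2 * π)) : ℝ)
        = 2 * π * (x / (2 * π) - round (x / (2 * π))) := by field_simp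
    rw [he, abs_mul, abs_of_pos (by positivity)]
    nlinarith [abs_sub_round (x / (2 * π)), abs_nonneg (x / (2 * π) - round (x / (2 * π)))]

theorem measurable_J1fun : Measurable J1fun := by
  have hround : Measurable fun x : ℝ => ((round (x / (2 * π)) : ℤ) : ℝ) := by
    simp only [round_eq]
    exact measurable_from_top.comp ((measurable_id.div_const _).add_const _).floor
  unfold J1fun
  exact Measurable.ite (measurableSet_eq_fun (measurable_id.sub (hround.const_mul _))
    measurable_const) measurable_const (measurable_id.sub (hround.const_mul _))

theorem integral_J1fun : ∫ x in (0:ℝ)..2 * π, J1fun x = 0 := by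
  have hπ := pi_pos
  have hshift := J1fun_periodic.intervalIntegral_add_eq (-π) 0
  rw [zero_add, show -π + 2 * π = π by ring] at hshift
  rw [← hshift, integral_congr_ae (g := fun x => x), integral_id]
  · ring
  · filter_upwards [compl_mem_ae_iff.2 (measure_singleton π)] with x hxπ hx
    rw [uIoc_of_le (by linarith)] at hx
    exact J1fun_eq_self hx.1 (lt_of_le_of_ne hx.2 hxπ)

theorem isZeroMeanPeriodic_J1fun : IsZeroMeanPeriodic (2 * π) J1fun :=
  ⟨⟨measurable_J1fun, π, abs_J1fun_le⟩, J1fun_periodic, integral_J1fun⟩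

theorem J1fun_add_pi_sub_sub_J1fun {x t : ℝ} (hx : 0 ≤ x) (hx' : x < 2 * π) (ht : 0 < t)
    (ht' : t < 2 * π) (htx : t ≠ x) :
    J1fun (x + π - t) - J1fun (π - t) = if t < x then x - 2 * π else x := by
  rw [J1fun_eq_self (x := π - t) (by linarith) (by linarith)]
  split_ifs with h
  · rw [J1fun_eq_sub_two_pi (by linarith) (by linarith)]
    ring
  · have hxt : x < t := lt_of_le_of_ne (not_lt.1 h) htx.symm
    rw [J1fun_eq_self (by linarith) (by linarith)]
    ring

theorem periodicConv_J1fun_add_pi_sub {φ : ℝ → ℝ} (hφ : BddMeasurable φ)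
    (hmean : ∫ t in (0:ℝ)..2 * π, φ t = 0) {x : ℝ} (hx : x ∈ Ico 0 (2 * π)) :
    periodicConv (2 * π) J1fun φ (x + π) - periodicConv (2 * π) J1fun φ π
      = -(2 * π) * ∫ t in (0:ℝ)..x, φ t := by
  have hJ1 := isZeroMeanPeriodic_J1fun.toBddMeasurable
  have hπ : 0 < 2 * π := by positivity
  have hφint := hφ.intervalIntegrable 0 (2 * π)
  have hind : IntervalIntegrable ({s | s ≤ x}.indicator φ) volume 0 (2 * π) :=
    ⟨hφint.1.indicator measurableSet_Iic, hφint.2.indicator measurableSet_Iic⟩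
  calc periodicConv (2 * π) J1fun φ (x + π) - periodicConv (2 * π) J1fun φ π
      = ∫ t in (0:ℝ)..2 * π, (x * φ t - 2 * π * {s | s ≤ x}.indicator φ t) := by
        rw [periodicConv, periodicConv,
          ← integral_sub (intervalIntegrable_comp_sub_mul hJ1 hφ _ _ _)
            (intervalIntegrable_comp_sub_mul hJ1 hφ _ _ _)]
        refine integral_congr_ae ?_
        filter_upwards [compl_mem_ae_iff.2 (measure_singleton x),
          compl_mem_ae_iff.2 (measure_singleton (2 * π))] with t htx ht2π ht
        rw [uIoc_of_le hπ.le] at ht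
        rw [← sub_mul, J1fun_add_pi_sub_sub_J1fun hx.1 hx.2 ht.1 (lt_of_le_of_ne ht.2 ht2π) htx]
        by_cases h : t < x
        · rw [if_pos h, indicator_of_mem (s := {s | s ≤ x}) h.le]
          ring
        · have hxt : ¬ t ≤ x := fun hle => h (lt_of_le_of_ne hle htx)
          rw [if_neg h, indicator_of_notMem (s := {s | s ≤ x}) hxt]
          ring
    _ = -(2 * π) * ∫ t in (0:ℝ)..x, φ t := by
        rw [integral_sub (hφint.const_mul _) (hind.const_mul _),
          intervalIntegral.integral_const_mul, intervalIntegral.integral_const_mul, hmean,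
          integral_indicator ⟨hx.1, hx.2.le⟩]
        ring

theorem IsTrigPoly.continuous {n : ℕ} {p : ℝ → ℝ} (hp : IsTrigPoly n p) : Continuous p := by
  obtain ⟨a, b, hab⟩ := hp
  rw [funext hab]
  fun_prop

theorem IsTrigPoly.periodic {n : ℕ} {p : ℝ → ℝ} (hp : IsTrigPoly n p) : Periodic p (2 * π) := by
  obtain ⟨a, b, hab⟩ := hp
  intro x
  simp only [hab, mul_add, cos_add_nat_mul_two_pi, sin_add_nat_mul_two_pi]

theorem IsTrigPoly.periodicConv_eq_zero {n : ℕ} {p φ : ℝ → ℝ} (hp : IsTrigPoly n p)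
    (hφ : BddMeasurable φ)
    (horth : ∀ j ≤ n, (∫ t in (0:ℝ)..2 * π, φ t * cos (j * t)) = 0 ∧
      (∫ t in (0:ℝ)..2 * π, φ t * sin (j * t)) = 0) (x : ℝ) :
    periodicConv (2 * π) p φ x = 0 := by
  obtain ⟨a, b, hab⟩ := hp
  have hcos (j : ℕ) : IntervalIntegrable (fun t => φ t * cos (j * t)) volume 0 (2 * π) :=
    (hφ.intervalIntegrable _ _).mul_continuousOn (by fun_prop)
  have hsin (j : ℕ) : IntervalIntegrable (fun t => φ t * sin (j * t)) volume 0 (2 * π) :=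
    (hφ.intervalIntegrable _ _).mul_continuousOn (by fun_prop)
  have hexpand (t : ℝ) : p (x - t) * φ t = ∑ j ∈ Finset.range (n + 1),
      ((a j * cos (j * x) + b j * sin (j * x)) * (φ t * cos (j * t)) +
        (a j * sin (j * x) - b j * cos (j * x)) * (φ t * sin (j * t))) := by
    rw [hab, Finset.sum_mul]
    refine Finset.sum_congr rfl fun j _ => ?_
    rw [mul_sub, cos_sub, sin_sub]
    ring
  rw [periodicConv, integral_congr fun t _ => hexpand t,
    integral_finsetSum fun j _ => ((hcos j).const_mul _).add ((hsin j).const_mul _)]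
  refine Finset.sum_eq_zero fun j hj => ?_
  obtain ⟨hc, hs⟩ := horth j (Nat.lt_succ_iff.1 (Finset.mem_range.1 hj))
  rw [integral_add ((hcos j).const_mul _) ((hsin j).const_mul _),
    intervalIntegral.integral_const_mul, intervalIntegral.integral_const_mul, hc, hs]
  ring

theorem eq_neg_periodicConv_of_primitive {J Φ : ℕ → ℝ → ℝ} {φ : ℝ → ℝ}
    (hJ : ∀ n, 1 ≤ n → IsZeroMeanPeriodic (2 * π) (J n)) (hJ1 : J 1 = J1fun)
    (hJrec : ∀ n, 1 ≤ n → ∀ x, J (n + 1) x = J (n + 1) 0 + ∫ t in (0:ℝ)..x, J n t)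
    (hΦ : ∀ n, IsZeroMeanPeriodic (2 * π) (Φ n)) (hΦ0 : Φ 0 = φ)
    (hΦrec : ∀ n x, Φ (n + 1) x = Φ (n + 1) 0 + ∫ t in (0:ℝ)..x, Φ n t) {n : ℕ} (hn : 1 ≤ n) :
    Φ n = fun x => -(2 * π)⁻¹ * periodicConv (2 * π) (J n) φ (x + π) := by
  have hπ : 0 < 2 * π := by positivity
  have hφ : BddMeasurable φ := hΦ0 ▸ (hΦ 0).toBddMeasurable
  have hΦsub (n : ℕ) (x : ℝ) : Φ (n + 1) x - Φ (n + 1) 0 = ∫ t in (0:ℝ)..x, Φ n t := by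
    rw [hΦrec n x]; ring
  have hconv {n : ℕ} (hn : 1 ≤ n) (hinc : ∀ x ∈ Ico 0 (2 * π), Φ n x - Φ n 0 =
      -(2 * π)⁻¹ * periodicConv (2 * π) (J n) φ (x + π)
        - -(2 * π)⁻¹ * periodicConv (2 * π) (J n) φ (0 + π)) :
      Φ n = fun x => -(2 * π)⁻¹ * periodicConv (2 * π) (J n) φ (x + π) := by
    refine eq_of_sub_eq_of_integral_eq_zero hπ (hΦ n).periodic ?_ ((hΦ n).intervalIntegrable _ _)
      (hΦ n).integral_eq_zero ?_ hinc
    · exact ((periodicConv_periodic (hJ n hn).periodic).add_const π).comp _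
    · rw [intervalIntegral.integral_const_mul, integral_periodicConv_add_eq_zero (hJ n hn) hφ,
        mul_zero]
  induction n, hn using Nat.le_induction with
  | base =>
    refine hconv le_rfl fun x hx => ?_
    rw [← mul_sub, zero_add, hJ1,
      periodicConv_J1fun_add_pi_sub hφ (hΦ0 ▸ (hΦ 0).integral_eq_zero) hx, hΦsub, hΦ0]
    field_simp
  | succ n hn ih =>
    refine hconv (by omega) fun x _ => ?_
    rw [← mul_sub, periodicConv_sub_periodicConv (hJ n hn).toBddMeasurable
      (hJ (n + 1) (by omega)).toBddMeasurable (hJrec n hn) hφ, hΦsub, ih,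
      ← integral_comp_add_right, ← intervalIntegral.integral_const_mul]

/-- **Key duality bound for higher primitives.**
If `φ` is a bounded measurable 2π-periodic function orthogonal to all
trigonometric polynomials of degree ≤ k−1, `Φ n` is the n-fold zero-mean
primitive of `φ`, and `J m` is the (m−1)-fold zero-mean primitive of the
sawtooth `J₁`, then for every trigonometric polynomial `p` of degree ≤ k−1,
`‖I^m φ‖_∞ ≤ ‖φ‖_∞ · ‖J_m − p‖_{L¹}`. -/
theorem higher_primitive_bound
    (k m : ℕ) (hk : 1 ≤ k) (hm : 1 ≤ m)
    (J : ℕ → ℝ → ℝ)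
    (hJ1 : J 1 = J1fun)
    (hJrec : ∀ n, 1 ≤ n → ∀ x : ℝ, J (n + 1) x = J (n + 1) 0 + ∫ t in (0:ℝ)..x, J n t)
    (hJmean : ∀ n, 1 ≤ n → (∫ x in (0:ℝ)..(2 * π), J (n + 1) x) = 0)
    (φ : ℝ → ℝ) (hmeas : Measurable φ) (hbdd : ∃ M, ∀ x, |φ x| ≤ M)
    (hper : Function.Periodic φ (2 * π))
    (horth : ∀ j : ℕ, j < k →
      (∫ x in (0:ℝ)..(2 * π), φ x * Real.cos (j * x)) = 0 ∧
      (∫ x in (0:ℝ)..(2 * π), φ x * Real.sin (j * x)) = 0)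
    (Φ : ℕ → ℝ → ℝ) (hΦ0 : Φ 0 = φ)
    (hΦrec : ∀ n, ∀ x : ℝ, Φ (n + 1) x = Φ (n + 1) 0 + ∫ t in (0:ℝ)..x, Φ n t)
    (hΦmean : ∀ n, (∫ x in (0:ℝ)..(2 * π), Φ (n + 1) x) = 0)
    (p : ℝ → ℝ) (hp : IsTrigPoly (k - 1) p) :
    (⨆ x : ℝ, |Φ m x|) ≤
      (⨆ x : ℝ, |φ x|) * ((1 / (2 * π)) * ∫ x in (0:ℝ)..(2 * π), |J m x - p x|) := by
  have h2π : (2 * π) ≠ 0 := by positivity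
  have hφ : IsZeroMeanPeriodic (2 * π) φ :=
    ⟨⟨hmeas, hbdd⟩, hper, by simpa using (horth 0 hk).1⟩
  have hJ : ∀ n, 1 ≤ n → IsZeroMeanPeriodic (2 * π) (J n) := by
    intro n hn
    induction n, hn using Nat.le_induction with
    | base => exact hJ1 ▸ isZeroMeanPeriodic_J1fun
    | succ n hn ih => exact ih.of_primitive h2π (hJrec n hn) (hJmean n hn)
  have hΦ : ∀ n, IsZeroMeanPeriodic (2 * π) (Φ n) := by
    intro n
    induction n with
    | zero => exact hΦ0 ▸ hφ
    | succ n ih => exact ih.of_primitive h2π (hΦrec n) (hΦmean n)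
  have hpφ := hp.periodicConv_eq_zero hφ.toBddMeasurable fun j hj => horth j (by omega)
  have hpbdd := hp.periodic.bddMeasurable_of_continuous h2π hp.continuous
  have hq := (hJ m hm).toBddMeasurable.sub hpbdd
  refine ciSup_le fun x => ?_
  calc |Φ m x| = (2 * π)⁻¹ * |periodicConv (2 * π) (J m - p) φ (x + π)| := by
        rw [eq_neg_periodicConv_of_primitive hJ hJ1 hJrec hΦ hΦ0 hΦrec hm]
        beta_reduce
        rw [periodicConv_sub (hJ m hm).toBddMeasurable hpbdd hφ.toBddMeasurable, hpφ, sub_zero,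
          abs_mul, abs_neg, abs_inv, abs_of_pos (by positivity)]
    _ ≤ (2 * π)⁻¹ * ((⨆ t, |φ t|) * ∫ t in (0:ℝ)..2 * π, |(J m - p) t|) := by
        gcongr
        exact abs_periodicConv_le (by positivity) hq ((hJ m hm).periodic.sub hp.periodic)
          hφ.toBddMeasurable _
    _ = (⨆ x : ℝ, |φ x|) * ((1 / (2 * π)) * ∫ x in (0:ℝ)..(2 * π), |J m x - p x|) := by
        simp only [Pi.sub_apply]
        ring
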